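/- arXiv:2402.01013 — 5 statements merged into one kernel-verified Lean document; each statement's English description precedes it below -/
import Mathlib

section
/- Assume p_min > p_tail and let T > 0 and q > 0 satisfy p_min·exp(−q²/2) ≥ p_tail + (p_min − p_tail)/2. If θ ∈ ℝ satisfies |θ − λ_m| ≤ q/T for some m ∈ D, then for every e ∈ ℂ with |e| ≤ (p_min − p_tail)/8 one has |Σ_{m′=1}^M p_{m′} exp(−T²(λ_{m′} − θ)²/2) + e| ≥ p_tail + 3(p_min − p_tail)/8. -/
/-! The filter sum is real, and its term at the dominant frequency `m` alone is already at
least `pmin * exp (-q ^ 2 / 2) ≥ ptail + (pmin - ptail) / 2`, since `T * |λ_m - θ| ≤ q`.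
A perturbation `e` of size at most `(pmin - ptail) / 8` can lower the modulus by no more
than `‖e‖`. -/

open Real Set

theorem Complex.sub_norm_le_norm_ofReal_add (S : ℝ) (e : ℂ) : S - ‖e‖ ≤ ‖(S : ℂ) + e‖ := by
  have := norm_sub_norm_le (S : ℂ) (-e)
  rw [norm_neg, sub_neg_eq_add, Complex.norm_real, Real.norm_eq_abs] at this
  linarith [le_abs_self S]

theorem Real.exp_neg_sq_div_two_le_of_abs_le_div {T q x : ℝ} (hT : 0 < T) (hx : |x| ≤ q / T) :
    exp (-q ^ 2 / 2) ≤ exp (-(T ^ 2 * x ^ 2) / 2) := by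
  have hTx : T * |x| ≤ q := by rwa [← le_div_iff₀' hT]
  have hsq : T ^ 2 * x ^ 2 ≤ q ^ 2 := by
    calc T ^ 2 * x ^ 2 = (T * |x|) ^ 2 := by rw [mul_pow, sq_abs]
      _ ≤ q ^ 2 := by gcongr
  gcongr

theorem filter_lower_bound_near_dominant_general
    (M : ℕ) (lam p : Fin M → ℝ) (D : Finset (Fin M)) (hD : D.Nonempty)
    (hp : ∀ m, 0 ≤ p m)
    (pmin ptail : ℝ) (hpmin : pmin = D.inf' hD p)
    (T q : ℝ) (hT : 0 < T)
    (hfil : ptail + (pmin - ptail) / 2 ≤ pmin * Real.exp (-q ^ 2 / 2))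
    (θ : ℝ) (m : Fin M) (hm : m ∈ D) (hθ : |θ - lam m| ≤ q / T)
    (e : ℂ) (he : ‖e‖ ≤ (pmin - ptail) / 8) :
    ptail + 3 * (pmin - ptail) / 8 ≤
      ‖(∑ m' : Fin M, (p m' : ℂ) * Real.exp (-(T ^ 2 * (lam m' - θ) ^ 2) / 2)) + e‖ := by
  set S : ℝ := ∑ m' : Fin M, p m' * exp (-(T ^ 2 * (lam m' - θ) ^ 2) / 2)
  have hS_cast : (∑ m' : Fin M, (p m' : ℂ) * Real.exp (-(T ^ 2 * (lam m' - θ) ^ 2) / 2))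
      = (S : ℂ) := by
    push_cast [S]; rfl
  have hpeak : pmin * exp (-q ^ 2 / 2) ≤ p m * exp (-(T ^ 2 * (lam m - θ) ^ 2) / 2) :=
    mul_le_mul (hpmin ▸ D.inf'_le p hm)
      (exp_neg_sq_div_two_le_of_abs_le_div hT (by rwa [abs_sub_comm]))
      (exp_pos _).le (hp m)
  have hS_ge : p m * exp (-(T ^ 2 * (lam m - θ) ^ 2) / 2) ≤ S :=
    Finset.single_le_sum (f := fun i => p i * exp (-(T ^ 2 * (lam i - θ) ^ 2) / 2))
      (fun i _ => mul_nonneg (hp i) (exp_pos _).le) (Finset.mem_univ m)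
  rw [hS_cast]
  linarith [Complex.sub_norm_le_norm_ofReal_add S e]

theorem filter_lower_bound_near_dominant
    (M : ℕ) (lam p : Fin M → ℝ) (D : Finset (Fin M)) (hD : D.Nonempty)
    (hp : ∀ m, 0 ≤ p m) (hsum : ∑ m, p m = 1)
    (pmin ptail : ℝ) (hpmin : pmin = D.inf' hD p) (hptail : ptail = ∑ m ∈ Dᶜ, p m)
    (hdom : ptail < pmin)
    (T q : ℝ) (hT : 0 < T) (hq : 0 < q)
    (hfil : ptail + (pmin - ptail) / 2 ≤ pmin * Real.exp (-q ^ 2 / 2))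
    (θ : ℝ) (m : Fin M) (hm : m ∈ D) (hθ : |θ - lam m| ≤ q / T)
    (e : ℂ) (he : ‖e‖ ≤ (pmin - ptail) / 8) :
    ptail + 3 * (pmin - ptail) / 8 ≤
      ‖(∑ m' : Fin M, (p m' : ℂ) * Real.exp (-(T ^ 2 * (lam m' - θ) ^ 2) / 2)) + e‖ :=
  filter_lower_bound_near_dominant_general M lam p D hD hp pmin ptail hpmin T q hT hfil θ m hm hθ e
    he
end

section
/- Assume p_min > p_tail and let T > 0 and α > 0 satisfy exp(−α²/18) ≤ (p_min − p_tail)/8. If θ ∈ ℝ satisfies |θ − λ_m| ≥ α/(3T) for every m ∈ D, then for every e ∈ ℂ with |e| ≤ (p_min − p_tail)/8 one has |Σ_{m′=1}^M p_{m′} exp(−T²(λ_{m′} − θ)²/2) + e| ≤ p_tail + (p_min − p_tail)/4. -/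
open Real

/- The Gaussian filter centred at `θ` is below `exp (-α² / 18)` at distance at least `α / (3T)`
from `θ` and below `1` everywhere, so the dominant indices contribute at most
`(p_min - p_tail) / 8` to the filtered sum and the others at most their total weight `p_tail`. -/

theorem neg_sq_mul_sq_div_two_le_of_le_abs {T α θ x : ℝ} (hT : 0 < T) (hα : 0 ≤ α)
    (hfar : α / (3 * T) ≤ |θ - x|) :
    -(T ^ 2 * (x - θ) ^ 2) / 2 ≤ -α ^ 2 / 18 := by
  have hlin : α ≤ 3 * (T * |θ - x|) := by
    rw [div_le_iff₀ (by positivity)] at hfar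
    linarith
  have hsq : α ^ 2 ≤ 9 * (T ^ 2 * (x - θ) ^ 2) := by
    calc α ^ 2 ≤ (3 * (T * |θ - x|)) ^ 2 := pow_le_pow_left₀ hα hlin 2
      _ = 9 * (T ^ 2 * (x - θ) ^ 2) := by rw [mul_pow, mul_pow, sq_abs]; ring
  linarith

theorem Finset.sum_mul_le_of_le_on_of_le_one_off {ι : Type*} [Fintype ι] [DecidableEq ι]
    (s : Finset ι) (p f : ι → ℝ) (hp : ∀ i, 0 ≤ p i) (ε : ℝ)
    (hs : ∀ i ∈ s, f i ≤ ε) (hsc : ∀ i ∉ s, f i ≤ 1) :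
    ∑ i, p i * f i ≤ (∑ i ∈ s, p i) * ε + ∑ i ∈ sᶜ, p i := by
  rw [← Finset.sum_add_sum_compl s, Finset.sum_mul]
  exact add_le_add
    (Finset.sum_le_sum fun i hi ↦ mul_le_mul_of_nonneg_left (hs i hi) (hp i))
    (Finset.sum_le_sum fun i hi ↦ mul_le_of_le_one_right (hp i) (hsc i (Finset.mem_compl.mp hi)))

theorem Complex.norm_ofReal_add_le {S : ℝ} (hS : 0 ≤ S) (e : ℂ) : ‖(S : ℂ) + e‖ ≤ S + ‖e‖ :=
  (norm_add_le _ _).trans_eq (by rw [Complex.norm_of_nonneg hS])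

theorem filter_upper_bound_far_from_dominant_general
    (M : ℕ) (lam p : Fin M → ℝ) (D : Finset (Fin M))
    (hp : ∀ m, 0 ≤ p m) (hsum : ∑ m, p m = 1)
    (pmin ptail : ℝ) (hptail : ptail = ∑ m ∈ Dᶜ, p m)
    (T α : ℝ) (hT : 0 < T) (hα : 0 < α)
    (hfil : Real.exp (-α ^ 2 / 18) ≤ (pmin - ptail) / 8)
    (θ : ℝ) (hθ : ∀ m ∈ D, α / (3 * T) ≤ |θ - lam m|)
    (e : ℂ) (he : ‖e‖ ≤ (pmin - ptail) / 8) :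
    ‖(∑ m' : Fin M, (p m' : ℂ) * Real.exp (-(T ^ 2 * (lam m' - θ) ^ 2) / 2)) + e‖ ≤
      ptail + (pmin - ptail) / 4 := by
  set g : Fin M → ℝ := fun m ↦ Real.exp (-(T ^ 2 * (lam m - θ) ^ 2) / 2)
  have hS : ∑ m, p m * g m ≤ (∑ m ∈ D, p m) * Real.exp (-α ^ 2 / 18) + ptail :=
    hptail ▸ D.sum_mul_le_of_le_on_of_le_one_off p g hp _
      (fun m hm ↦ exp_le_exp.mpr (neg_sq_mul_sq_div_two_le_of_le_abs hT hα.le (hθ m hm)))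
      (fun m _ ↦ exp_le_one_iff.mpr (by nlinarith [sq_nonneg T, sq_nonneg (lam m - θ)]))
  have hD : ∑ m ∈ D, p m ≤ 1 :=
    hsum ▸ Finset.sum_le_sum_of_subset_of_nonneg D.subset_univ fun m _ _ ↦ hp m
  have hcast : ∑ m, (p m : ℂ) * g m = ((∑ m, p m * g m : ℝ) : ℂ) := by push_cast; rfl
  calc _ ≤ ∑ m, p m * g m + ‖e‖ :=
        hcast ▸ Complex.norm_ofReal_add_le
          (Finset.sum_nonneg fun m _ ↦ mul_nonneg (hp m) (exp_pos _).le) e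
    _ ≤ ptail + (pmin - ptail) / 4 := by
        linarith [mul_le_mul_of_nonneg_right hD (exp_pos (-α ^ 2 / 18)).le]

theorem filter_upper_bound_far_from_dominant
    (M : ℕ) (lam p : Fin M → ℝ) (D : Finset (Fin M)) (hD : D.Nonempty)
    (hp : ∀ m, 0 ≤ p m) (hsum : ∑ m, p m = 1)
    (pmin ptail : ℝ) (hpmin : pmin = D.inf' hD p) (hptail : ptail = ∑ m ∈ Dᶜ, p m)
    (hdom : ptail < pmin)
    (T α : ℝ) (hT : 0 < T) (hα : 0 < α)
    (hfil : Real.exp (-α ^ 2 / 18) ≤ (pmin - ptail) / 8)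
    (θ : ℝ) (hθ : ∀ m ∈ D, α / (3 * T) ≤ |θ - lam m|)
    (e : ℂ) (he : ‖e‖ ≤ (pmin - ptail) / 8) :
    ‖(∑ m' : Fin M, (p m' : ℂ) * Real.exp (-(T ^ 2 * (lam m' - θ) ^ 2) / 2)) + e‖ ≤
      ptail + (pmin - ptail) / 4 :=
  filter_upper_bound_far_from_dominant_general M lam p D hp hsum pmin ptail hptail T α hT hα hfil θ
    hθ e he
end

section
/- Let T, q, α > 0 with q < α/3 and α/q ∈ ℕ, let D be a nonempty finite index set with λ_i ∈ [−π, π] for each i ∈ D, let G : ℝ → ℝ, and let B ∈ ℝ. Assume: (i) every grid point θ with min_{i∈D} |θ − λ_i| ≤ q/T satisfies G(θ) ≥ B; (ii) every grid point θ with min_{i∈D} |θ − λ_i| ≥ α/(3T) satisfies G(θ) < B. Let K ≥ |D| and let 𝛉₁, …, 𝛉_K be a greedy block search of length K for G (in particular, at each step k a maximizer over the unblocked grid points exists and is chosen). Then for each i ∈ D there exists k with 1 ≤ k ≤ |D| and |λ_i − 𝛉_k| ≤ α/T. -/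
open Real Set

noncomputable section

/-- The candidate grid `θ_j = -π + jq/T`, `0 ≤ j ≤ ⌊2πT/q⌋`. -/
def qGrid (T q : ℝ) : Set ℝ :=
  {x | ∃ j : ℕ, j ≤ ⌊2 * π * T / q⌋₊ ∧ x = -π + j * q / T}

/-- A greedy block search of length `K` for `G`: at each step `k`, `bθ k` is a grid
point outside the blocked set, maximizing `G` among such grid points. -/
def GreedyBlockSearch (T q α : ℝ) (G : ℝ → ℝ) {K : ℕ} (bθ : Fin K → ℝ) : Prop :=
  ∀ k : Fin K,
    bθ k ∈ qGrid T q ∧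
    bθ k ∉ (⋃ j < k, Ioo (bθ j - α / T) (bθ j + α / T)) ∧
    ∀ x ∈ qGrid T q, x ∉ (⋃ j < k, Ioo (bθ j - α / T) (bθ j + α / T)) → G x ≤ G (bθ k)

/-- Every `l ∈ [-π, π]` has a grid point `θ` with `0 ≤ l - θ < q/T`. -/
lemma qGrid_exists_near (T q : ℝ) (hT : 0 < T) (hq : 0 < q) {l : ℝ}
    (hl : l ∈ Icc (-π) π) :
    ∃ θ ∈ qGrid T q, 0 ≤ l - θ ∧ l - θ < q / T := by
  obtain ⟨hl1, hl2⟩ := hl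
  set j : ℕ := ⌊(l + π) * T / q⌋₊ with hj
  have h0 : 0 ≤ (l + π) * T / q := div_nonneg (mul_nonneg (by linarith) hT.le) hq.le
  refine ⟨-π + j * q / T, ⟨j, ?_, rfl⟩, ?_, ?_⟩
  · apply Nat.floor_le_floor
    gcongr
    linarith
  · have h1 : (j : ℝ) ≤ (l + π) * T / q := Nat.floor_le h0
    have h2 : (j : ℝ) * q ≤ (l + π) * T := (le_div_iff₀ hq).mp h1
    have h3 : (j : ℝ) * q / T ≤ l + π := (div_le_iff₀ hT).mpr (by linarith)
    linarith
  · have h1 : (l + π) * T / q < (j : ℝ) + 1 := Nat.lt_floor_add_one _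
    have h2 : (l + π) * T < ((j : ℝ) + 1) * q := (div_lt_iff₀ hq).mp h1
    have h3 : l + π < ((j : ℝ) * q + q) / T := (lt_div_iff₀ hT).mpr (by linarith)
    have h4 : ((j : ℝ) * q + q) / T = (j : ℝ) * q / T + q / T := by ring
    linarith

/-- Two grid points differ by a natural multiple of `q/T`. -/
lemma qGrid_sub (T q : ℝ) (hT : 0 < T) (hq : 0 < q) {x y : ℝ}
    (hx : x ∈ qGrid T q) (hy : y ∈ qGrid T q) :
    ∃ m : ℕ, |x - y| = m * q / T := by
  obtain ⟨a, -, rfl⟩ := hx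
  obtain ⟨b, -, rfl⟩ := hy
  rcases le_total a b with h | h
  · refine ⟨b - a, ?_⟩
    have hab : (a : ℝ) ≤ b := Nat.cast_le.mpr h
    have hnn : (0 : ℝ) ≤ ((b : ℝ) - a) * q / T :=
      div_nonneg (mul_nonneg (by linarith) hq.le) hT.le
    rw [show (-π + (a : ℝ) * q / T) - (-π + (b : ℝ) * q / T)
        = -(((b : ℝ) - a) * q / T) by ring, abs_neg, abs_of_nonneg hnn, Nat.cast_sub h]
  · refine ⟨a - b, ?_⟩
    have hab : (b : ℝ) ≤ a := Nat.cast_le.mpr h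
    have hnn : (0 : ℝ) ≤ ((a : ℝ) - b) * q / T :=
      div_nonneg (mul_nonneg (by linarith) hq.le) hT.le
    rw [show (-π + (a : ℝ) * q / T) - (-π + (b : ℝ) * q / T)
        = ((a : ℝ) - b) * q / T by ring, abs_of_nonneg hnn, Nat.cast_sub h]

/-- If two grid points are strictly within `n·q/T` then they are within `n·q/T - q/T`. -/
lemma qGrid_close (T q : ℝ) (hT : 0 < T) (hq : 0 < q) {x y : ℝ}
    (hx : x ∈ qGrid T q) (hy : y ∈ qGrid T q) {n : ℕ}
    (h : |x - y| < n * q / T) :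
    |x - y| ≤ n * q / T - q / T := by
  obtain ⟨m, hm⟩ := qGrid_sub T q hT hq hx hy
  have hqT : 0 < q / T := div_pos hq hT
  rw [hm] at h ⊢
  rw [mul_div_assoc] at h ⊢
  rw [mul_div_assoc] at h ⊢
  have hmn : (m : ℝ) < n := lt_of_mul_lt_mul_right h hqT.le
  have hmn' : m < n := by exact_mod_cast hmn
  have h1 : (m : ℝ) + 1 ≤ n := by exact_mod_cast hmn'
  nlinarith [mul_nonneg (by linarith : (0 : ℝ) ≤ (n : ℝ) - m - 1) hqT.le]

theorem greedy_search_covers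
    {ι : Type*} (D : Finset ι) (hD : D.Nonempty) (lam : ι → ℝ)
    (hlam : ∀ i ∈ D, lam i ∈ Icc (-π) π)
    (T q α : ℝ) (hT : 0 < T) (hq : 0 < q) (hα : 0 < α)
    (hqα : q < α / 3) (hdiv : ∃ n : ℕ, α = n * q)
    (G : ℝ → ℝ) (B : ℝ)
    (hnear : ∀ θ ∈ qGrid T q, (∃ i ∈ D, |θ - lam i| ≤ q / T) → B ≤ G θ)
    (hfar : ∀ θ ∈ qGrid T q, (∀ i ∈ D, α / (3 * T) ≤ |θ - lam i|) → G θ < B)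
    (K : ℕ) (hK : D.card ≤ K) (bθ : Fin K → ℝ)
    (hsearch : GreedyBlockSearch T q α G bθ) :
    ∀ i ∈ D, ∃ k : Fin K, (k : ℕ) < D.card ∧ |lam i - bθ k| ≤ α / T := by
  classical
  obtain ⟨n, hn⟩ := hdiv
  have hαT : 0 < α / T := div_pos hα hT
  have hα3T : 0 < α / (3 * T) := div_pos hα (by linarith)
  have h3eq : α / (3 * T) = α / T / 3 := by ring
  have h3le : α / (3 * T) ≤ α / T := by rw [h3eq]; linarith
  have hαn : α / T = n * q / T := by rw [hn]
  -- coverage sets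
  set Cov : ℕ → Finset ι := fun k =>
    D.filter (fun i => ∃ j : Fin K, (j : ℕ) < k ∧ |lam i - bθ j| ≤ α / T) with hCov
  set Cov' : ℕ → Finset ι := fun k =>
    D.filter (fun i => ∃ j : Fin K, (j : ℕ) < k ∧ |lam i - bθ j| < α / (3 * T)) with hCov'
  have hmono : ∀ k, Cov k ⊆ Cov (k + 1) := by
    intro k i hi
    rw [hCov, Finset.mem_filter] at hi ⊢
    obtain ⟨h1, j, hj, h2⟩ := hi
    exact ⟨h1, j, Nat.lt_succ_of_lt hj, h2⟩
  have hmono' : ∀ k, Cov' k ⊆ Cov' (k + 1) := by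
    intro k i hi
    rw [hCov', Finset.mem_filter] at hi ⊢
    obtain ⟨h1, j, hj, h2⟩ := hi
    exact ⟨h1, j, Nat.lt_succ_of_lt hj, h2⟩
  have key : ∀ k, k ≤ D.card → (k ≤ (Cov' k).card ∨ D ⊆ Cov k) := by
    intro k
    induction k with
    | zero => intro _; left; exact Nat.zero_le _
    | succ k ih =>
      intro hk1
      have hkD : k < D.card := hk1
      have hkK : k < K := lt_of_lt_of_le hkD hK
      set kF : Fin K := ⟨k, hkK⟩ with hkF
      by_cases hall : D ⊆ Cov k
      · right; exact hall.trans (hmono k)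
      have hcard : k ≤ (Cov' k).card := by
        rcases ih hkD.le with h | h
        · exact h
        · exact absurd h hall
      obtain ⟨i, hiD, hiC⟩ := Finset.not_subset.mp hall
      have hiun : ∀ j : Fin K, (j : ℕ) < k → ¬ |lam i - bθ j| ≤ α / T := by
        intro j hj hle
        exact hiC (by rw [hCov, Finset.mem_filter]; exact ⟨hiD, j, hj, hle⟩)
      obtain ⟨θ, hθG, hθ0, hθq⟩ := qGrid_exists_near T q hT hq (hlam i hiD)
      obtain ⟨hkG, hkB, hkMax⟩ := hsearch kF
      -- the near grid point is unblocked at step k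
      have hθun : θ ∉ (⋃ j < kF, Ioo (bθ j - α / T) (bθ j + α / T)) := by
        intro hmem
        simp only [Set.mem_iUnion, Set.mem_Ioo] at hmem
        obtain ⟨j, hj, h1, h2⟩ := hmem
        have hj' : (j : ℕ) < k := hj
        have hd : |θ - bθ j| < α / T := abs_sub_lt_iff.mpr ⟨by linarith, by linarith⟩
        have hd2 : |θ - bθ j| ≤ α / T - q / T := by
          have := qGrid_close T q hT hq hθG ((hsearch j).1) (n := n) (by rwa [← hαn])
          rw [← hαn] at this
          exact this
        have hli : |lam i - θ| < q / T := by
          rw [abs_of_nonneg hθ0]; exact hθq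
        have : |lam i - bθ j| < α / T :=
          lt_of_le_of_lt (abs_sub_le _ θ _) (by linarith)
        exact hiun j hj' this.le
      have hθB : B ≤ G θ := by
        apply hnear θ hθG
        refine ⟨i, hiD, ?_⟩
        rw [abs_sub_comm, abs_of_nonneg hθ0]
        exact hθq.le
      have hGk : B ≤ G (bθ kF) := hθB.trans (hkMax θ hθG hθun)
      have hclose : ∃ i' ∈ D, |bθ kF - lam i'| < α / (3 * T) := by
        by_contra hc
        push_neg at hc
        exact absurd hGk (not_le.mpr (hfar _ hkG hc))
      obtain ⟨i', hi'D, hi'c⟩ := hclose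
      have hnew : i' ∉ Cov' k := by
        intro hmem
        rw [hCov', Finset.mem_filter] at hmem
        obtain ⟨-, j, hj, hjc⟩ := hmem
        have hblk : |bθ kF - bθ j| < α / T := by
          calc |bθ kF - bθ j| ≤ |bθ kF - lam i'| + |lam i' - bθ j| := abs_sub_le _ _ _
            _ < α / (3 * T) + α / (3 * T) := add_lt_add hi'c hjc
            _ ≤ α / T := by rw [h3eq]; linarith
        have hnb : bθ kF ∉ (⋃ j < kF, Ioo (bθ j - α / T) (bθ j + α / T)) := hkB
        apply hnb
        simp only [Set.mem_iUnion, Set.mem_Ioo]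
        refine ⟨j, hj, ?_, ?_⟩
        · have := (abs_sub_lt_iff.mp hblk).2
          linarith
        · have := (abs_sub_lt_iff.mp hblk).1
          linarith
      have hin : i' ∈ Cov' (k + 1) := by
        rw [hCov', Finset.mem_filter]
        refine ⟨hi'D, kF, Nat.lt_succ_self k, ?_⟩
        rw [abs_sub_comm]
        exact hi'c
      left
      have hss : Cov' k ⊂ Cov' (k + 1) :=
        ⟨hmono' k, fun hsub => hnew (hsub hin)⟩
      have := Finset.card_lt_card hss
      omega
  intro i hiD
  have hget : ∀ s : Finset ι, i ∈ s →
      (s = Cov D.card ∨ s = Cov' D.card) → ∃ k : Fin K, (k : ℕ) < D.card ∧ |lam i - bθ k| ≤ α / T := by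
    intro s his hs
    rcases hs with rfl | rfl
    · rw [hCov, Finset.mem_filter] at his
      obtain ⟨-, j, hj, hjc⟩ := his
      exact ⟨j, hj, hjc⟩
    · rw [hCov', Finset.mem_filter] at his
      obtain ⟨-, j, hj, hjc⟩ := his
      exact ⟨j, hj, hjc.le.trans h3le⟩
  rcases key D.card le_rfl with h | h
  · have hsub : Cov' D.card ⊆ D := by rw [hCov']; exact Finset.filter_subset _ _
    have heq : Cov' D.card = D := Finset.eq_of_subset_of_card_le hsub h
    exact hget _ (by rw [heq]; exact hiD) (Or.inr rfl)
  · exact hget _ (h hiD) (Or.inl rfl)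

end
end

section
/- Let T > 0, let p*, p_min, p_tail ≥ 0 and ζ ≥ 0 satisfy 0 < p_min ≤ p* and (1 + 2ζ/5)·p_tail < p_min, and let λ*, θ ∈ ℝ. Suppose real numbers g₁, g₂ satisfy: g₁ ≤ p*·exp(−T²(λ* − θ)²/2) + p_tail + ζ p_tail/5; g₂ ≥ p* − ζ p_tail/10; and g₁ ≥ g₂ − ζ p_tail/10. Then |λ* − θ| ≤ (1/T)·( −2·log(1 − (1 + 2ζ/5)·p_tail/p_min) )^{1/2}. -/
open Real

/-!
Chaining the three bounds on `g₁, g₂` gives `p* (1 - G) ≤ (1 + 2ζ/5) p_tail`, where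
`G = exp (-T² (λ* - θ)² / 2) ≤ 1`; since `1 - G ≥ 0`, `p*` may be lowered to `p_min`, and
taking logarithms inverts the Gaussian.
-/

theorem abs_le_one_div_mul_sqrt_of_le_exp {T a x : ℝ} (hT : 0 < T) (ha : 0 < a)
    (h : a ≤ exp (-(T ^ 2 * x ^ 2) / 2)) :
    |x| ≤ (1 / T) * sqrt (-2 * log a) := by
  have hlog : log a ≤ -(T ^ 2 * x ^ 2) / 2 := (log_le_iff_le_exp ha).mpr h
  have hTx : |T * x| ≤ sqrt (-2 * log a) := Real.abs_le_sqrt (by rw [mul_pow]; linarith)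
  rw [abs_mul, abs_of_pos hT] at hTx
  rw [one_div_mul_eq_div, le_div_iff₀' hT]
  exact hTx

theorem one_sub_div_le_of_sub_le_mul {p q c e : ℝ} (hp : 0 < p) (hpq : p ≤ q) (he : e ≤ 1)
    (h : q - c ≤ q * e) : 1 - c / p ≤ e := by
  have hmono : p * (1 - e) ≤ q * (1 - e) := mul_le_mul_of_nonneg_right hpq (by linarith)
  rw [sub_le_comm, le_div_iff₀' hp]
  linarith

theorem rough_localization_bound_general
    (T pstar pmin ptail ζ : ℝ) (hT : 0 < T)
    (hpmin0 : 0 < pmin) (hpminstar : pmin ≤ pstar)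
    (hlt : (1 + 2 * ζ / 5) * ptail < pmin)
    (lamstar θ g₁ g₂ : ℝ)
    (hg₁ : g₁ ≤ pstar * Real.exp (-(T ^ 2 * (lamstar - θ) ^ 2) / 2) + ptail + ζ * ptail / 5)
    (hg₂ : pstar - ζ * ptail / 10 ≤ g₂)
    (hg₁₂ : g₂ - ζ * ptail / 10 ≤ g₁) :
    |lamstar - θ| ≤
      (1 / T) * Real.sqrt (-2 * Real.log (1 - (1 + 2 * ζ / 5) * ptail / pmin)) := by
  have hexp_le_one : exp (-(T ^ 2 * (lamstar - θ) ^ 2) / 2) ≤ 1 :=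
    exp_le_one_iff.mpr (by nlinarith [sq_nonneg (T * (lamstar - θ))])
  have hmass : pstar - (1 + 2 * ζ / 5) * ptail
      ≤ pstar * exp (-(T ^ 2 * (lamstar - θ) ^ 2) / 2) := by
    linarith
  have hpos : 0 < 1 - (1 + 2 * ζ / 5) * ptail / pmin :=
    sub_pos.mpr ((div_lt_one hpmin0).mpr hlt)
  exact abs_le_one_div_mul_sqrt_of_le_exp hT hpos
    (one_sub_div_le_of_sub_le_mul hpmin0 hpminstar hexp_le_one hmass)

theorem rough_localization_bound
    (T pstar pmin ptail ζ : ℝ) (hT : 0 < T)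
    (hpstar : 0 ≤ pstar) (hpmin0 : 0 < pmin) (hpminstar : pmin ≤ pstar)
    (hptail : 0 ≤ ptail) (hζ : 0 ≤ ζ)
    (hlt : (1 + 2 * ζ / 5) * ptail < pmin)
    (lamstar θ g₁ g₂ : ℝ)
    (hg₁ : g₁ ≤ pstar * Real.exp (-(T ^ 2 * (lamstar - θ) ^ 2) / 2) + ptail + ζ * ptail / 5)
    (hg₂ : pstar - ζ * ptail / 10 ≤ g₂)
    (hg₁₂ : g₂ - ζ * ptail / 10 ≤ g₁) :
    |lamstar - θ| ≤
      (1 / T) * Real.sqrt (-2 * Real.log (1 - (1 + 2 * ζ / 5) * ptail / pmin)) :=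
  rough_localization_bound_general T pstar pmin ptail ζ hT hpmin0 hpminstar hlt lamstar θ g₁ g₂ hg₁
    hg₂ hg₁₂
end

section
/- For every T ≥ 1 and every x ∈ [0, 2π/3], Σ_{j∈ℤ} exp(−2πT²(πj² + jx)) ≤ 1 + exp(−2π²/3) + 2·Σ_{j=1}^∞ exp(−2πj) < 1.01. -/
/-!
For `j ≠ 0`, `T ≥ 1` and `0 ≤ x ≤ 2π/3` the exponent satisfies
`πj² + jx ≥ π|j|² - (2π/3)|j| ≥ (π/3)|j| ≥ |j|`, so the `j`-th term is at most `exp(-2π|j|)`.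
The term `j = -1` is bounded more sharply by `exp(-2π²/3)` since `π - x ≥ π/3`, and pairing each
`j ≥ 1` with `-(j + 1)` leaves two copies of the geometric series `Σ exp(-2πj)`, which is
`e^{-2π}/(1 - e^{-2π}) < 0.0026`.
-/
open Real Set

noncomputable section

/-- The (unnormalized) `2π`-periodization of the Gaussian `x ↦ exp(-x²T²/2)`. -/
def periodicGaussSum (T x : ℝ) : ℝ :=
  ∑' j : ℤ, Real.exp (-((x + 2 * π * j) ^ 2 * T ^ 2) / 2)

/-- The normalizing constant `W = (Σ_{j∈ℤ} exp(-2π²j²T²))⁻¹`, so that `φ_p(0) = 1`. -/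
def Wconst (T : ℝ) : ℝ := (∑' j : ℤ, Real.exp (-(2 * π ^ 2 * j ^ 2 * T ^ 2)))⁻¹

/-- The periodic Gaussian `φ_p(x) = W·Σ_{j∈ℤ} exp(-(x+2πj)²T²/2)`. -/
def phip (T x : ℝ) : ℝ := Wconst T * periodicGaussSum T x

lemma tsum_int_le_of_le {f : ℤ → ℝ} {u : ℕ → ℝ} (hf : 0 ≤ f) (hu : Summable u)
    (hpos : ∀ n : ℕ, f (n + 1) ≤ u n) (hneg : ∀ n : ℕ, f (-(n + 2)) ≤ u n) :
    ∑' j, f j ≤ f 0 + f (-1) + 2 * ∑' n, u n := by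
  have hpos' : Summable fun n : ℕ => f (n + 1) := hu.of_nonneg_of_le (fun _ => hf _) hpos
  have hneg' : Summable fun n : ℕ => f (-(n + 2)) := hu.of_nonneg_of_le (fun _ => hf _) hneg
  have hnat : Summable fun n : ℕ => f n := by
    rw [← summable_nat_add_iff 1]
    exact_mod_cast hpos'
  have hnegSucc : Summable fun n : ℕ => f (-(n + 1)) := by
    refine (summable_nat_add_iff 1).mp ?_
    simpa only [Nat.cast_add, Nat.cast_one, add_assoc, one_add_one_eq_two] using hneg'
  have hpair : Summable fun n : ℕ => f n + f (-(n + 1)) := hnat.add hnegSucc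
  calc ∑' j, f j = ∑' n : ℕ, (f n + f (-(n + 1))) :=
        (tsum_nat_add_neg_add_one (hnat.of_nat_of_neg_add_one hnegSucc)).symm
    _ = f 0 + f (-1) + ∑' n : ℕ, (f (n + 1) + f (-(n + 2))) := by
        rw [hpair.tsum_eq_zero_add]
        simp only [Nat.cast_zero, Nat.cast_add, Nat.cast_one, zero_add, add_assoc,
          one_add_one_eq_two]
    _ ≤ f 0 + f (-1) + ∑' n : ℕ, (u n + u n) := by
        gcongr _ + ?_
        exact (hpos'.add hneg').tsum_le_tsum (fun n => add_le_add (hpos n) (hneg n)) (hu.add hu)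
    _ = f 0 + f (-1) + 2 * ∑' n, u n := by
        rw [hu.tsum_add hu]
        ring

lemma hasSum_exp_neg_mul_add_one {c : ℝ} (hc : 0 < c) :
    HasSum (fun n : ℕ => exp (-(c * (n + 1)))) (exp (-c) / (1 - exp (-c))) := by
  have hr : exp (-c) < 1 := exp_lt_one_iff.mpr (neg_neg_of_pos hc)
  have hterm : (fun n : ℕ => exp (-(c * (n + 1)))) = fun n => exp (-c) * exp (-c) ^ n := by
    funext n
    rw [← exp_nat_mul, ← exp_add]
    ring_nf
  rw [hterm, div_eq_mul_inv]
  exact (hasSum_geometric_of_lt_one (exp_pos _).le hr).mul_left (exp (-c))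

lemma exp_neg_six_lt : exp (-6) < 0.0025 := by
  have h : exp (-6) = exp (-1) ^ 6 := by rw [← exp_nat_mul]; norm_num
  rw [h]
  calc exp (-1) ^ 6 < 0.3678794412 ^ 6 := by
        gcongr
        exact exp_neg_one_lt_d9
    _ < 0.0025 := by norm_num

lemma abs_le_pi_mul_sq_add_mul {r x : ℝ} (hr : 1 ≤ |r|) (hx₀ : 0 ≤ x) (hx : x ≤ 2 * π / 3) :
    |r| ≤ π * r ^ 2 + r * x := by
  have hrx : -(|r| * (2 * π / 3)) ≤ r * x := by
    nlinarith [neg_abs_le r, mul_le_mul_of_nonneg_left hx (abs_nonneg r)]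
  have hfactor : 0 ≤ |r| * (π * |r| - 2 * π / 3 - 1) :=
    mul_nonneg (abs_nonneg r) (by nlinarith [pi_gt_three])
  nlinarith [sq_abs r]

lemma exp_neg_quadratic_le {T x r : ℝ} (hT : 1 ≤ T) (hr : 1 ≤ |r|) (hx₀ : 0 ≤ x)
    (hx : x ≤ 2 * π / 3) :
    exp (-(2 * π * T ^ 2 * (π * r ^ 2 + r * x))) ≤ exp (-(2 * π * |r|)) := by
  have hq := abs_le_pi_mul_sq_add_mul hr hx₀ hx
  have hT2 : 1 ≤ T ^ 2 := one_le_pow₀ hT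
  refine exp_le_exp.mpr (neg_le_neg ?_)
  nlinarith [pi_pos, mul_le_mul_of_nonneg_right hT2 ((abs_nonneg r).trans hq)]

lemma exp_neg_quadratic_neg_one_le {T x : ℝ} (hT : 1 ≤ T) (hx : x ≤ 2 * π / 3) :
    exp (-(2 * π * T ^ 2 * (π * (-1) ^ 2 + (-1) * x))) ≤ exp (-(2 * π ^ 2 / 3)) := by
  have hT2 : 1 ≤ T ^ 2 := one_le_pow₀ hT
  have hq : π / 3 ≤ π * (-1) ^ 2 + (-1) * x := by linarith
  refine exp_le_exp.mpr (neg_le_neg ?_)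
  nlinarith [pi_pos, mul_le_mul_of_nonneg_right hT2 ((by positivity : (0 : ℝ) ≤ π / 3).trans hq)]

lemma one_add_exp_add_two_mul_tsum_lt :
    1 + exp (-(2 * π ^ 2 / 3)) + 2 * ∑' j : ℕ, exp (-(2 * π * (j + 1))) < 1.01 := by
  have hr : exp (-(2 * π)) < 0.0025 :=
    (exp_le_exp.mpr (by linarith [pi_gt_three])).trans_lt exp_neg_six_lt
  have he : exp (-(2 * π ^ 2 / 3)) < 0.0025 :=
    (exp_le_exp.mpr (by nlinarith [pi_gt_three])).trans_lt exp_neg_six_lt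
  have hS : exp (-(2 * π)) / (1 - exp (-(2 * π))) < 0.0026 := by
    rw [div_lt_iff₀ (by linarith)]
    linarith
  rw [(hasSum_exp_neg_mul_add_one (by positivity : 0 < 2 * π)).tsum_eq]
  linarith

theorem periodicGaussian_sum_bound (T : ℝ) (hT : 1 ≤ T)
    (x : ℝ) (hx : x ∈ Icc (0 : ℝ) (2 * π / 3)) :
    (∑' j : ℤ, Real.exp (-(2 * π * T ^ 2 * (π * j ^ 2 + j * x)))) ≤
        1 + Real.exp (-(2 * π ^ 2 / 3)) + 2 * ∑' j : ℕ, Real.exp (-(2 * π * (j + 1))) ∧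
      1 + Real.exp (-(2 * π ^ 2 / 3)) + 2 * ∑' j : ℕ, Real.exp (-(2 * π * (j + 1))) < 1.01 := by
  obtain ⟨hx₀, hx⟩ := hx
  set f : ℤ → ℝ := fun j => exp (-(2 * π * T ^ 2 * (π * j ^ 2 + j * x)))
  have hpos (n : ℕ) : f (n + 1) ≤ exp (-(2 * π * (n + 1))) := by
    have h := exp_neg_quadratic_le (r := n + 1) hT (by rw [abs_of_pos (by positivity)]; simp) hx₀ hx
    rw [abs_of_pos (by positivity)] at h
    simpa only [f, Int.cast_add, Int.cast_natCast, Int.cast_one] using h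
  have hneg (n : ℕ) : f (-(n + 2)) ≤ exp (-(2 * π * (n + 1))) := by
    have h := exp_neg_quadratic_le (r := -(n + 2)) hT
      (by rw [abs_neg, abs_of_pos (by positivity)]; linarith [n.cast_nonneg (α := ℝ)]) hx₀ hx
    rw [abs_neg, abs_of_pos (by positivity)] at h
    simp only [f, Int.cast_neg, Int.cast_add, Int.cast_natCast, Int.cast_ofNat]
    exact h.trans (exp_le_exp.mpr (by nlinarith [pi_pos]))
  refine ⟨?_, one_add_exp_add_two_mul_tsum_lt⟩
  calc ∑' j, f j ≤ f 0 + f (-1) + 2 * ∑' n : ℕ, exp (-(2 * π * (n + 1))) :=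
        tsum_int_le_of_le (fun j => (exp_pos _).le)
          (hasSum_exp_neg_mul_add_one (by positivity)).summable hpos hneg
    _ ≤ _ := by
        gcongr
        · simp [f]
        · simpa only [f, Int.cast_neg, Int.cast_one] using exp_neg_quadratic_neg_one_le hT hx

end
end
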